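/- Let μ > 1 be real and for each integer n ∈ ℤ set r_n = (μⁿ − 1)/(μⁿ + 1) ∈ (−1, 1). Let w : ∂𝔻 → [0, ∞] be measurable with ∫_{∂𝔻} w(ζ)/(|ζ − 1|·|ζ + 1|) dm(ζ) < ∞. Then ∑_{n ∈ ℤ} ∫_{∂𝔻} w(ζ) · P_{r_n}(ζ) dm(ζ) < ∞, where P_ρ(ζ) = (1 − ρ²)/|ζ − ρ|². (Applied to w = |f|², this says ∑_{n∈ℤ} ‖f ∘ φ_μ^{∘n}‖²_{H²} < ∞ whenever f ∈ √((z−1)(z+1)) H².) -/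

import Mathlib

/-!
For `‖ζ‖ = 1` and `t = μⁿ`, the Poisson kernel at `rₙ = (t - 1)/(t + 1)` equals
`4t / (t²|ζ - 1|² + |ζ + 1|²)`, which is at most `4/(|ζ - 1||ζ + 1|) · min(x, x⁻¹)` with
`x = t|ζ - 1|/|ζ + 1|`. As `n` runs over `ℤ`, `x` runs through a geometric progression of ratio `μ`,
so `∑ₙ min(x, x⁻¹)` is dominated by a two-sided geometric series whose sum does not depend on `ζ`.
Hence `∑ₙ P_{rₙ}(ζ) ≤ C / (|ζ - 1||ζ + 1|)`, and integrating against `w` gives the theorem.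
-/

open MeasureTheory ENNReal

/-- Normalized arclength (Haar) measure on the unit circle `∂𝔻 ⊆ ℂ`, of total mass 1. -/
noncomputable def circleMeasure : Measure ℂ :=
  Measure.map (fun θ : ℝ => Complex.exp (θ * Complex.I))
    ((ENNReal.ofReal (2 * Real.pi))⁻¹ • volume.restrict (Set.Ioc (-Real.pi) Real.pi))

section LowerIntegral

variable {α ι : Type*} [MeasurableSpace α] (ν : Measure α) (f : ι → α → ℝ≥0∞)

theorem finsetSum_lintegral_le_lintegral_finsetSum (s : Finset ι) :
    ∑ i ∈ s, ∫⁻ a, f i a ∂ν ≤ ∫⁻ a, ∑ i ∈ s, f i a ∂ν := by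
  classical
  induction s using Finset.induction_on with
  | empty => simp
  | insert i s hi ih =>
    simp only [Finset.sum_insert hi]
    exact (add_le_add_right ih _).trans (le_lintegral_add _ _)

theorem tsum_lintegral_le_lintegral_tsum :
    ∑' i, ∫⁻ a, f i a ∂ν ≤ ∫⁻ a, ∑' i, f i a ∂ν := by
  rw [ENNReal.tsum_eq_iSup_sum]
  exact iSup_le fun s => (finsetSum_lintegral_le_lintegral_finsetSum ν f s).trans
    (lintegral_mono fun a => ENNReal.sum_le_tsum s)

end LowerIntegral

theorem hasSum_pow_natAbs {q : ℝ} (hq₀ : 0 ≤ q) (hq₁ : q < 1) :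
    HasSum (fun n : ℤ => q ^ n.natAbs) ((1 + q) / (1 - q)) := by
  have hpos : HasSum (fun n : ℕ => q ^ n) (1 - q)⁻¹ := hasSum_geometric_of_lt_one hq₀ hq₁
  have hneg : HasSum (fun n : ℕ => q ^ (n + 1)) (q * (1 - q)⁻¹) := by
    simpa only [pow_succ'] using hpos.mul_left q
  have hnat (n : ℕ) : (-((n : ℤ) + 1)).natAbs = n + 1 := by omega
  convert hpos.of_nat_of_neg_add_one (f := fun n : ℤ => q ^ n.natAbs)
    (by simpa only [hnat] using hneg) using 1
  field_simp [(sub_pos.2 hq₁).ne']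

theorem min_self_inv_le_of_mem_Ico {μ x : ℝ} {j : ℤ} (hμ : 1 < μ)
    (hx : x ∈ Set.Ico (μ ^ j) (μ ^ (j + 1))) : min x x⁻¹ ≤ μ * μ⁻¹ ^ j.natAbs := by
  have hμ₀ : 0 < μ := zero_lt_one.trans hμ
  obtain ⟨hjx, hxj⟩ := hx
  rcases le_or_gt 0 j with hj | hj
  · obtain ⟨k, rfl⟩ := Int.eq_ofNat_of_zero_le hj
    calc min x x⁻¹ ≤ x⁻¹ := min_le_right _ _
      _ ≤ (μ ^ k)⁻¹ := by
        rw [zpow_natCast] at hjx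
        exact inv_anti₀ (by positivity) hjx
      _ ≤ μ * μ⁻¹ ^ (k : ℤ).natAbs := by
        rw [Int.natAbs_natCast, inv_pow]
        exact le_mul_of_one_le_left (by positivity) hμ.le
  · obtain ⟨k, rfl⟩ := Int.exists_eq_neg_ofNat hj.le
    calc min x x⁻¹ ≤ x := min_le_left _ _
      _ ≤ μ ^ (-(k : ℤ) + 1) := hxj.le
      _ = μ * μ⁻¹ ^ (-(k : ℤ)).natAbs := by
        rw [zpow_add₀ hμ₀.ne', Int.natAbs_neg, Int.natAbs_natCast, zpow_neg, zpow_natCast,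
          inv_pow, zpow_one, mul_comm]

theorem tsum_ofReal_min_zpow_mul_le {μ c : ℝ} (hμ : 1 < μ) (hc : 0 < c) :
    ∑' n : ℤ, ENNReal.ofReal (min (μ ^ n * c) (μ ^ n * c)⁻¹) ≤
      ENNReal.ofReal (μ * (μ + 1) / (μ - 1)) := by
  have hμ₀ : 0 < μ := zero_lt_one.trans hμ
  obtain ⟨k, hk⟩ := exists_mem_Ico_zpow hc hμ
  have hgeom : HasSum (fun n : ℤ => μ * μ⁻¹ ^ (n + k).natAbs) (μ * (μ + 1) / (μ - 1)) := by
    have h := ((Equiv.addRight k).hasSum_iff.2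
      (hasSum_pow_natAbs (inv_nonneg.2 hμ₀.le) (inv_lt_one_of_one_lt₀ hμ))).mul_left μ
    have hval : μ * ((1 + μ⁻¹) / (1 - μ⁻¹)) = μ * (μ + 1) / (μ - 1) := by
      field_simp [(sub_pos.2 hμ).ne']
    exact hval ▸ h
  have hterm (n : ℤ) : min (μ ^ n * c) (μ ^ n * c)⁻¹ ≤ μ * μ⁻¹ ^ (n + k).natAbs := by
    refine min_self_inv_le_of_mem_Ico hμ ⟨?_, ?_⟩
    · rw [zpow_add₀ hμ₀.ne']
      exact mul_le_mul_of_nonneg_left hk.1 (by positivity)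
    · rw [add_assoc, zpow_add₀ hμ₀.ne']
      exact mul_lt_mul_of_pos_left hk.2 (by positivity)
  calc ∑' n : ℤ, ENNReal.ofReal (min (μ ^ n * c) (μ ^ n * c)⁻¹)
      ≤ ∑' n : ℤ, ENNReal.ofReal (μ * μ⁻¹ ^ (n + k).natAbs) :=
        ENNReal.tsum_le_tsum fun n => ENNReal.ofReal_le_ofReal (hterm n)
    _ = ENNReal.ofReal (μ * (μ + 1) / (μ - 1)) := by
        rw [← ENNReal.ofReal_tsum_of_nonneg (fun n => by positivity) hgeom.summable,
          hgeom.tsum_eq]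

theorem div_sq_add_one_le_min {x : ℝ} (hx : 0 < x) : x / (x ^ 2 + 1) ≤ min x x⁻¹ := by
  refine le_min ?_ ?_
  · exact div_le_self hx.le (by nlinarith)
  · rw [div_le_iff₀ (by positivity), inv_mul_eq_div, le_div_iff₀ hx]
    nlinarith

theorem norm_sub_ofReal_sq (ζ : ℂ) (c : ℝ) : ‖ζ - c‖ ^ 2 = ‖ζ‖ ^ 2 - 2 * c * ζ.re + c ^ 2 := by
  simp only [Complex.sq_norm, Complex.normSq_apply, Complex.sub_re, Complex.sub_im,
    Complex.ofReal_re, Complex.ofReal_im]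
  ring

theorem poissonKernel_zero_ofReal_of_norm_eq_one {ζ : ℂ} (hζ : ‖ζ‖ = 1) (ρ : ℝ) :
    poissonKernel 0 ρ ζ = (1 - ρ ^ 2) / ‖ζ - ρ‖ ^ 2 := by
  simp [poissonKernel_def, hζ]

theorem poissonKernel_eq_of_norm_eq_one {ζ : ℂ} (hζ : ‖ζ‖ = 1) {t : ℝ} (ht : 0 < t) :
    poissonKernel 0 ((t - 1) / (t + 1) : ℝ) ζ = 4 * t / (t ^ 2 * ‖ζ - 1‖ ^ 2 + ‖ζ + 1‖ ^ 2) := by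
  have ht₁ : t + 1 ≠ 0 := by positivity
  have hnum : 1 - ((t - 1) / (t + 1)) ^ 2 = 4 * t / (t + 1) ^ 2 := by
    field_simp
    ring
  have hden : ‖ζ - ((t - 1) / (t + 1) : ℝ)‖ ^ 2 =
      (t ^ 2 * ‖ζ - 1‖ ^ 2 + ‖ζ + 1‖ ^ 2) / (t + 1) ^ 2 := by
    have hminus := norm_sub_ofReal_sq ζ 1
    have hplus := norm_sub_ofReal_sq ζ (-1)
    push_cast at hminus hplus
    rw [sub_neg_eq_add] at hplus
    rw [norm_sub_ofReal_sq, hminus, hplus, hζ]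
    field_simp
    ring
  rw [poissonKernel_zero_ofReal_of_norm_eq_one hζ, hnum, hden,
    div_div_div_cancel_right₀ (by positivity)]

theorem poissonKernel_le_min {ζ : ℂ} (hζ : ‖ζ‖ = 1) (h₁ : 0 < ‖ζ - 1‖) (h₂ : 0 < ‖ζ + 1‖)
    {t : ℝ} (ht : 0 < t) :
    poissonKernel 0 ((t - 1) / (t + 1) : ℝ) ζ ≤ 4 / (‖ζ - 1‖ * ‖ζ + 1‖) *
      min (t * (‖ζ - 1‖ / ‖ζ + 1‖)) (t * (‖ζ - 1‖ / ‖ζ + 1‖))⁻¹ := by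
  rw [poissonKernel_eq_of_norm_eq_one hζ ht]
  set a := ‖ζ - 1‖
  set b := ‖ζ + 1‖
  calc 4 * t / (t ^ 2 * a ^ 2 + b ^ 2)
        = 4 / (a * b) * (t * (a / b) / ((t * (a / b)) ^ 2 + 1)) := by field_simp
    _ ≤ 4 / (a * b) * min (t * (a / b)) (t * (a / b))⁻¹ := by
        gcongr
        exact div_sq_add_one_le_min (by positivity)

theorem tsum_poissonKernel_orbit_le {μ : ℝ} (hμ : 1 < μ) {ζ : ℂ} (hζ : ‖ζ‖ = 1) :
    ∑' n : ℤ, ENNReal.ofReal (poissonKernel 0 ((μ ^ n - 1) / (μ ^ n + 1) : ℝ) ζ) ≤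
      ENNReal.ofReal (4 * (μ * (μ + 1) / (μ - 1))) / ENNReal.ofReal (‖ζ - 1‖ * ‖ζ + 1‖) := by
  have hμ₀ : 0 < μ := zero_lt_one.trans hμ
  have hC : 0 < 4 * (μ * (μ + 1) / (μ - 1)) := by
    have := sub_pos.2 hμ
    positivity
  have hC' : ENNReal.ofReal (4 * (μ * (μ + 1) / (μ - 1))) ≠ 0 := by simpa using hC
  rcases (norm_nonneg (ζ - 1)).eq_or_lt with h₁ | h₁
  · rw [← h₁, zero_mul, ENNReal.ofReal_zero, ENNReal.div_zero hC']
    exact le_top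
  rcases (norm_nonneg (ζ + 1)).eq_or_lt with h₂ | h₂
  · rw [← h₂, mul_zero, ENNReal.ofReal_zero, ENNReal.div_zero hC']
    exact le_top
  set a := ‖ζ - 1‖
  set b := ‖ζ + 1‖
  calc ∑' n : ℤ, ENNReal.ofReal (poissonKernel 0 ((μ ^ n - 1) / (μ ^ n + 1) : ℝ) ζ)
      ≤ ∑' n : ℤ, ENNReal.ofReal (4 / (a * b)) *
          ENNReal.ofReal (min (μ ^ n * (a / b)) (μ ^ n * (a / b))⁻¹) :=
        ENNReal.tsum_le_tsum fun n => (ENNReal.ofReal_le_ofReal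
          (poissonKernel_le_min hζ h₁ h₂ (zpow_pos hμ₀ n))).trans
          (ENNReal.ofReal_mul (by positivity)).le
    _ ≤ ENNReal.ofReal (4 / (a * b)) * ENNReal.ofReal (μ * (μ + 1) / (μ - 1)) := by
        rw [ENNReal.tsum_mul_left]
        gcongr
        exact tsum_ofReal_min_zpow_mul_le hμ (div_pos h₁ h₂)
    _ = ENNReal.ofReal (4 * (μ * (μ + 1) / (μ - 1))) / ENNReal.ofReal (a * b) := by
        rw [← ENNReal.ofReal_mul (by positivity), ← ENNReal.ofReal_div_of_pos (by positivity)]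
        ring_nf

theorem circleMeasure_ae_norm_eq_one : ∀ᵐ ζ ∂circleMeasure, ‖ζ‖ = 1 := by
  have hexp : Measurable fun θ : ℝ => Complex.exp (θ * Complex.I) := by fun_prop
  rw [circleMeasure, ae_map_iff hexp.aemeasurable
    (measurableSet_eq_fun measurable_norm measurable_const)]
  exact Filter.Eventually.of_forall Complex.norm_exp_ofReal_mul_I

theorem summable_poisson_integrals_over_orbit_general
    (μ : ℝ) (hμ : 1 < μ)
    (r : ℤ → ℝ) (hr : ∀ n : ℤ, r n = (μ ^ n - 1) / (μ ^ n + 1))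
    (w : ℂ → ℝ≥0∞)
    (hint : (∫⁻ ζ, w ζ / ENNReal.ofReal (‖ζ - 1‖ * ‖ζ + 1‖) ∂circleMeasure) ≠ ⊤) :
    (∑' n : ℤ, ∫⁻ ζ, w ζ *
        ENNReal.ofReal ((1 - r n ^ 2) / ‖ζ - (r n : ℂ)‖ ^ 2) ∂circleMeasure) < ⊤ := by
  set C := ENNReal.ofReal (4 * (μ * (μ + 1) / (μ - 1)))
  have hbound : (fun ζ => ∑' n : ℤ, w ζ * ENNReal.ofReal ((1 - r n ^ 2) / ‖ζ - (r n : ℂ)‖ ^ 2))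
      ≤ᵐ[circleMeasure] fun ζ => C * (w ζ / ENNReal.ofReal (‖ζ - 1‖ * ‖ζ + 1‖)) := by
    filter_upwards [circleMeasure_ae_norm_eq_one] with ζ hζ
    simp only [ENNReal.tsum_mul_left, hr, ← poissonKernel_zero_ofReal_of_norm_eq_one hζ]
    calc w ζ * ∑' n : ℤ, ENNReal.ofReal (poissonKernel 0 ((μ ^ n - 1) / (μ ^ n + 1) : ℝ) ζ)
        ≤ w ζ * (C / ENNReal.ofReal (‖ζ - 1‖ * ‖ζ + 1‖)) :=
          mul_le_mul_right (tsum_poissonKernel_orbit_le hμ hζ) _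
      _ = C * (w ζ / ENNReal.ofReal (‖ζ - 1‖ * ‖ζ + 1‖)) := by
          simp only [div_eq_mul_inv]
          ring
  calc _ ≤ ∫⁻ ζ, ∑' n : ℤ, w ζ * ENNReal.ofReal ((1 - r n ^ 2) / ‖ζ - (r n : ℂ)‖ ^ 2)
          ∂circleMeasure := tsum_lintegral_le_lintegral_tsum _ _
    _ ≤ ∫⁻ ζ, C * (w ζ / ENNReal.ofReal (‖ζ - 1‖ * ‖ζ + 1‖)) ∂circleMeasure :=
          lintegral_mono_ae hbound
    _ = C * ∫⁻ ζ, w ζ / ENNReal.ofReal (‖ζ - 1‖ * ‖ζ + 1‖) ∂circleMeasure :=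
          lintegral_const_mul' _ _ ENNReal.ofReal_ne_top
    _ < ⊤ := ENNReal.mul_lt_top ENNReal.ofReal_lt_top hint.lt_top

/-- Let `μ > 1` and `r_n = (μⁿ-1)/(μⁿ+1)` for `n ∈ ℤ`. If
`w : ∂𝔻 → [0,∞]` is measurable with `∫ w(ζ)/(|ζ-1||ζ+1|) dm < ∞`, then
`∑_{n∈ℤ} ∫ w·P_{r_n} dm < ∞`, where `P_ρ(ζ) = (1-ρ²)/|ζ-ρ|²`.
(For `w = |f|²` this says `∑_{n∈ℤ} ‖f∘φ_μ^[n]‖² < ∞` when `f ∈ √((z-1)(z+1))H²`.) -/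
theorem summable_poisson_integrals_over_orbit
    (μ : ℝ) (hμ : 1 < μ)
    (r : ℤ → ℝ) (hr : ∀ n : ℤ, r n = (μ ^ n - 1) / (μ ^ n + 1))
    (w : ℂ → ℝ≥0∞) (hw : Measurable w)
    (hint : (∫⁻ ζ, w ζ / ENNReal.ofReal (‖ζ - 1‖ * ‖ζ + 1‖) ∂circleMeasure) ≠ ⊤) :
    (∑' n : ℤ, ∫⁻ ζ, w ζ *
        ENNReal.ofReal ((1 - r n ^ 2) / ‖ζ - (r n : ℂ)‖ ^ 2) ∂circleMeasure) < ⊤ :=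
  summable_poisson_integrals_over_orbit_general μ hμ r hr w hint
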